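/- Induction step for the probability exponents (case A1 of the key lemma). Let d ≥ 1, θ ∈ (0, 1/3), and let p, p', L, Y, a, σ, σ̃ be positive reals and S ≥ 1 an integer such that: L > 1, Y > 1, a > 1, p < 1; p' ≤ (a·p)^{S+1}; σ̃ := (ln p^{−1})/(ln L) ≥ σ; 1 − (ln a)/(σ̃·ln L) ≥ (1+3θ)/2; and (ln Y)/(ln(YL)) ≤ 2θ/(1+3θ). Then (ln p'^{−1})/(ln(YL)) ≥ (1+θ)·σ. -/
import Mathlib


/-- **Induction step for the probability exponents (case A1 of the key lemma).**
Let `d ≥ 1`, `θ ∈ (0, 1/3)`, positive reals `p, p', L, Y, a, σ, σ̃` and an integer `S ≥ 1`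
with `L, Y, a > 1`, `p < 1`, `p' ≤ (a p)^{S+1}`, `σ̃ = (ln p⁻¹)/(ln L) ≥ σ`,
`1 - (ln a)/(σ̃ ln L) ≥ (1+3θ)/2` and `(ln Y)/(ln (YL)) ≤ 2θ/(1+3θ)`.
Then `(ln p'⁻¹)/(ln (YL)) ≥ (1+θ)σ`. -/
theorem probability_exponent_induction_step
    (d : ℕ) (hd : 1 ≤ d) (θ : ℝ) (hθ0 : 0 < θ) (hθ1 : θ < 1 / 3)
    (p p' L Y a σ σt : ℝ) (S : ℕ) (hS : 1 ≤ S)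
    (hp0 : 0 < p) (hp'0 : 0 < p') (hσ0 : 0 < σ) (hσt0 : 0 < σt)
    (hL : 1 < L) (hY : 1 < Y) (ha : 1 < a) (hp1 : p < 1)
    (hp' : p' ≤ (a * p) ^ (S + 1))
    (hσt : σt = Real.log p⁻¹ / Real.log L) (hσσt : σ ≤ σt)
    (h1 : (1 + 3 * θ) / 2 ≤ 1 - Real.log a / (σt * Real.log L))
    (h2 : Real.log Y / Real.log (Y * L) ≤ 2 * θ / (1 + 3 * θ)) :
    (1 + θ) * σ ≤ Real.log p'⁻¹ / Real.log (Y * L) := by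
  have hlogL : 0 < Real.log L := Real.log_pos hL
  have hlogY : 0 < Real.log Y := Real.log_pos hY
  have hYL : 1 < Y * L := one_lt_mul hY.le hL
  have hlogYL : 0 < Real.log (Y * L) := Real.log_pos hYL
  have hM : 0 < σt * Real.log L := by positivity
  have hlogp : Real.log p = -(σt * Real.log L) := by
    have : σt * Real.log L = Real.log p⁻¹ := by
      rw [hσt]; field_simp
    rw [Real.log_inv] at this
    linarith
  have hla : Real.log a ≤ (1 - 3 * θ) / 2 * (σt * Real.log L) := by
    have h' : Real.log a / (σt * Real.log L) ≤ (1 - 3 * θ) / 2 := by linarith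
    exact (div_le_iff₀ hM).mp h'
  -- bound on log p'
  have hlp' : Real.log p' ≤ ((S : ℝ) + 1) * Real.log (a * p) := by
    have h0 : Real.log p' ≤ Real.log ((a * p) ^ (S + 1)) :=
      Real.log_le_log hp'0 hp'
    have h1' : Real.log ((a * p) ^ (S + 1)) = ((S : ℝ) + 1) * Real.log (a * p) := by
      rw [Real.log_pow]; push_cast; ring
    linarith [h0, h1'.le]
  have hlap : Real.log (a * p) = Real.log a - σt * Real.log L := by
    rw [Real.log_mul (by positivity) hp0.ne', hlogp]; ring
  have hS2 : (2 : ℝ) ≤ (S : ℝ) + 1 := by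
    have : (1 : ℝ) ≤ (S : ℝ) := by exact_mod_cast hS
    linarith
  have hneg : Real.log (a * p) ≤ -((1 + 3 * θ) / 2 * (σt * Real.log L)) := by
    rw [hlap]; nlinarith [hla]
  have key : (1 + 3 * θ) * (σt * Real.log L) ≤ Real.log p'⁻¹ := by
    rw [Real.log_inv]
    have hXneg : Real.log (a * p) ≤ 0 := by nlinarith [hneg, hM, hθ0]
    have hmul : ((S : ℝ) + 1) * Real.log (a * p) ≤ 2 * Real.log (a * p) :=
      mul_le_mul_of_nonpos_right hS2 hXneg
    nlinarith [hlp', hneg, hmul]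
  -- relate log L and log (Y*L)
  have hsum : Real.log (Y * L) = Real.log Y + Real.log L :=
    Real.log_mul (by positivity) (by positivity)
  have hY2 : Real.log Y ≤ 2 * θ / (1 + 3 * θ) * Real.log (Y * L) :=
    (div_le_iff₀ hlogYL).mp h2
  have hA : (1 + θ) * Real.log (Y * L) ≤ (1 + 3 * θ) * Real.log L := by
    have hθ3 : 0 < 1 + 3 * θ := by linarith
    have : Real.log L = Real.log (Y * L) - Real.log Y := by linarith [hsum]
    rw [this]
    have := hY2
    rw [div_mul_eq_mul_div, le_div_iff₀ hθ3] at this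
    linarith [this]
  rw [le_div_iff₀ hlogYL]
  have e1 : (1 + θ) * σ * Real.log (Y * L) ≤ (1 + θ) * σt * Real.log (Y * L) :=
    mul_le_mul_of_nonneg_right
      (mul_le_mul_of_nonneg_left hσσt (by linarith : (0:ℝ) ≤ 1 + θ)) hlogYL.le
  have e2 : σt * ((1 + θ) * Real.log (Y * L)) ≤ σt * ((1 + 3 * θ) * Real.log L) :=
    mul_le_mul_of_nonneg_left hA hσt0.le
  linarith [e1, e2, key]
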